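/- Define ψ₀ : ℝ → ℂ² by ψ₀(x) = ( i√(k/(2β))·x·exp(−√(βk/2)·x²/2), exp(−√(βk/2)·x²/2) ). Then ψ₀ is a vacuum state for the harmonic Lévy-Leblond Hamiltonian: (bψ₀)(x) = 0 for all x ∈ ℝ, and (H_LL ψ₀)(x) = (ω/2) γ₊ ψ₀(x) for all x ∈ ℝ; that is, ψ₀ is a γ₊-eigenstate with γ₊-eigenvalue ω/2. -/

import Mathlib

open Matrix

noncomputable section

/-- The gamma matrix `γ¹ = [[1,0],[0,−1]]`. -/
def γ1 : Matrix (Fin 2) (Fin 2) ℂ := !![1, 0; 0, -1]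

/-- The gamma matrix `γ₊ = [[0,1],[0,0]]`. -/
def γp : Matrix (Fin 2) (Fin 2) ℂ := !![0, 1; 0, 0]

/-- The gamma matrix `γ₋ = [[0,0],[1,0]]`. -/
def γm : Matrix (Fin 2) (Fin 2) ℂ := !![0, 0; 1, 0]

/-- The harmonic Lévy-Leblond Hamiltonian:
`(H_LL ψ)(x) = β γ₋ ψ(x) − i γ¹ ψ′(x) + (k/2) x² γ₊ ψ(x)`. -/
def HLL (β k : ℝ) (ψ : ℝ → (Fin 2 → ℂ)) : ℝ → (Fin 2 → ℂ) :=
  fun x => (β : ℂ) • γm.mulVec (ψ x) - Complex.I • γ1.mulVec (deriv ψ x)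
    + ((k / 2 * x ^ 2 : ℝ) : ℂ) • γp.mulVec (ψ x)

/-- The lowering operator:
`(bψ)(x) = √(βk/2)·x·ψ(x) + ψ′(x) − i√(k/(2β)) γ₊ ψ(x)`. -/
def lower (β k : ℝ) (ψ : ℝ → (Fin 2 → ℂ)) : ℝ → (Fin 2 → ℂ) :=
  fun x => ((Real.sqrt (β * k / 2) * x : ℝ) : ℂ) • ψ x + deriv ψ x
    - (Complex.I * ((Real.sqrt (k / (2 * β)) : ℝ) : ℂ)) • γp.mulVec (ψ x)

/-- The raising operator:
`(b†ψ)(x) = √(βk/2)·x·ψ(x) − ψ′(x) − i√(k/(2β)) γ₊ ψ(x)`. -/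
def raise (β k : ℝ) (ψ : ℝ → (Fin 2 → ℂ)) : ℝ → (Fin 2 → ℂ) :=
  fun x => ((Real.sqrt (β * k / 2) * x : ℝ) : ℂ) • ψ x - deriv ψ x
    - (Complex.I * ((Real.sqrt (k / (2 * β)) : ℝ) : ℂ)) • γp.mulVec (ψ x)

/-- The vacuum state `ψ₀(x) = ( i√(k/(2β))·x·exp(−√(βk/2)·x²/2), exp(−√(βk/2)·x²/2) )`. -/
def vacuum (β k : ℝ) : ℝ → (Fin 2 → ℂ) :=
  fun x => ![Complex.I * ((Real.sqrt (k / (2 * β)) : ℝ) : ℂ) * (x : ℂ)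
      * Complex.exp (-(((Real.sqrt (β * k / 2) : ℝ) : ℂ)) * (x : ℂ) ^ 2 / 2),
    Complex.exp (-(((Real.sqrt (β * k / 2) : ℝ) : ℂ)) * (x : ℂ) ^ 2 / 2)]

/-!
With `a = √(βk/2)`, `c = √(k/(2β))` and `e(x) = exp(-a x²/2)` we have `ψ₀ = (i c x e, e)` and
`ψ₀' = (i c (1 - a x²) e, -a x e)`. Then `bψ₀ = 0` is a polynomial identity in `a`, `c`, `x`, `e`,
and `H_LL ψ₀ = (ω/2) γ₊ ψ₀` reduces to the relations `c a = k/2`, `β c = a` and `ω/2 = c`.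
-/

open Complex

lemma γp_mulVec (u v : ℂ) : γp.mulVec ![u, v] = ![v, 0] := by
  ext i; fin_cases i <;> simp [γp, Matrix.mulVec, dotProduct, Fin.sum_univ_two]

lemma γm_mulVec (u v : ℂ) : γm.mulVec ![u, v] = ![0, u] := by
  ext i; fin_cases i <;> simp [γm, Matrix.mulVec, dotProduct, Fin.sum_univ_two]

lemma γ1_mulVec (u v : ℂ) : γ1.mulVec ![u, v] = ![u, -v] := by
  ext i; fin_cases i <;> simp [γ1, Matrix.mulVec, dotProduct, Fin.sum_univ_two]

theorem hasDerivAt_cexp_neg_mul_sq_div_two (a z : ℂ) :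
    HasDerivAt (fun w : ℂ => cexp (-a * w ^ 2 / 2)) (-a * z * cexp (-a * z ^ 2 / 2)) z :=
  (((hasDerivAt_pow 2 z).const_mul (-a)).div_const 2).cexp.congr_deriv (by push_cast; ring)

theorem hasDerivAt_mul_cexp_neg_mul_sq_div_two (a z : ℂ) :
    HasDerivAt (fun w : ℂ => w * cexp (-a * w ^ 2 / 2))
      ((1 - a * z ^ 2) * cexp (-a * z ^ 2 / 2)) z :=
  ((hasDerivAt_id' z).mul (hasDerivAt_cexp_neg_mul_sq_div_two a z)).congr_deriv (by ring)

theorem deriv_vacuum (β k x : ℝ) :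
    deriv (vacuum β k) x =
      ![I * ((√(k / (2 * β)) : ℝ) : ℂ) * ((1 - ((√(β * k / 2) : ℝ) : ℂ) * (x : ℂ) ^ 2)
          * cexp (-((√(β * k / 2) : ℝ) : ℂ) * (x : ℂ) ^ 2 / 2)),
        -((√(β * k / 2) : ℝ) : ℂ) * x * cexp (-((√(β * k / 2) : ℝ) : ℂ) * (x : ℂ) ^ 2 / 2)] := by
  refine HasDerivAt.deriv (hasDerivAt_pi.2 fun i => ?_)
  fin_cases i
  · simpa only [vacuum, Fin.zero_eta, Matrix.cons_val_zero, mul_assoc] using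
      ((hasDerivAt_mul_cexp_neg_mul_sq_div_two _ _).comp_ofReal).const_mul
        (I * ((√(k / (2 * β)) : ℝ) : ℂ))
  · exact (hasDerivAt_cexp_neg_mul_sq_div_two _ _).comp_ofReal

theorem lower_vacuum (β k x : ℝ) : lower β k (vacuum β k) x = 0 := by
  simp only [lower, deriv_vacuum, vacuum, γp_mulVec, ofReal_mul]
  set a : ℂ := ((√(β * k / 2) : ℝ) : ℂ)
  set c : ℂ := ((√(k / (2 * β)) : ℝ) : ℂ)
  set e := cexp (-a * (x : ℂ) ^ 2 / 2)
  rw [← cons_zero_zero, ← cons_zero_zero, zero_empty]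
  simp only [smul_cons, smul_eq_mul, smul_empty, add_cons, sub_cons, head_cons, tail_cons,
    empty_add_empty, empty_sub_empty]
  apply vec2_eq <;> ring

theorem sqrt_div_mul_sqrt {β k : ℝ} (hβ : 0 < β) (hk : 0 ≤ k) :
    √(k / (2 * β)) * √(β * k / 2) = k / 2 := by
  rw [← Real.sqrt_mul (by positivity), show k / (2 * β) * (β * k / 2) = (k / 2) ^ 2 by
    field_simp]
  exact Real.sqrt_sq (by positivity)

theorem mul_sqrt_div {β : ℝ} (hβ : 0 < β) (k : ℝ) : β * √(k / (2 * β)) = √(β * k / 2) := by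
  nth_rewrite 1 [← Real.sqrt_sq hβ.le]
  rw [← Real.sqrt_mul (sq_nonneg β)]
  congr 1
  field_simp

theorem sqrt_two_mul_div_div_two (β k : ℝ) : √(2 * k / β) / 2 = √(k / (2 * β)) := by
  rw [show 2 * k / β = 2 ^ 2 * (k / (2 * β)) by ring, Real.sqrt_mul (by positivity),
    Real.sqrt_sq zero_le_two]
  ring

theorem HLL_vacuum {β k : ℝ} (hβ : 0 < β) (hk : 0 ≤ k) (x : ℝ) :
    HLL β k (vacuum β k) x = ((√(2 * k / β) / 2 : ℝ) : ℂ) • γp.mulVec (vacuum β k x) := by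
  have hca := congrArg ofReal (sqrt_div_mul_sqrt hβ hk)
  have hβc := congrArg ofReal (mul_sqrt_div hβ k)
  push_cast at hca hβc
  simp only [HLL, deriv_vacuum, sqrt_two_mul_div_div_two, vacuum, γp_mulVec, γm_mulVec, γ1_mulVec,
    ofReal_mul, ofReal_div, ofReal_pow, ofReal_ofNat]
  set a : ℂ := ((√(β * k / 2) : ℝ) : ℂ)
  set c : ℂ := ((√(k / (2 * β)) : ℝ) : ℂ)
  set e := cexp (-a * (x : ℂ) ^ 2 / 2)
  simp only [smul_cons, smul_eq_mul, smul_empty, add_cons, sub_cons, head_cons, tail_cons,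
    empty_add_empty, empty_sub_empty]
  apply vec2_eq
  · linear_combination (I_sq * c * (a * x ^ 2 - 1) - x ^ 2 * hca) * e
  · linear_combination I * x * e * hβc

/-- `ψ₀` is a vacuum state for the harmonic Lévy-Leblond Hamiltonian:
`bψ₀ = 0` and `H_LL ψ₀ = (ω/2) γ₊ ψ₀` with `ω = √(2k/β)`, i.e. `ψ₀` is a `γ₊`-eigenstate
with `γ₊`-eigenvalue `ω/2`. -/
theorem vacuum_state (β k : ℝ) (hβ : 0 < β) (hk : 0 < k) :
    (∀ x : ℝ, lower β k (vacuum β k) x = 0) ∧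
    (∀ x : ℝ, HLL β k (vacuum β k) x
      = ((Real.sqrt (2 * k / β) / 2 : ℝ) : ℂ) • γp.mulVec (vacuum β k x)) :=
  ⟨lower_vacuum β k, HLL_vacuum hβ hk.le⟩

end
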